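/- Operational formula for the Arimoto–Rényi conditional quantity: for any strictly positive joint PMF p_{XG}, order q ∈ (0,1) ∪ (1,∞), and constant C > 0, max over conditional betting PMFs b_{X|G} of (Σ_{x,g} (b(x|g)·C)^{1−1/q} p(x,g))^{1/(1−1/q)} equals C · p_q(X|G), where p_q(X|G) = (Σ_g (Σ_x p(x,g)^q)^{1/q})^{q/(q−1)}. -/

import Mathlib

/-!
For each side information `g` the bet `b(·|g)` enters only through
`V_g(b) = Σ_x b(x|g)^(1-1/q) p(x,g)`. Hölder's inequality with exponents `q/(q-1)` and `q`
(for `q > 1`), resp. `1/q` and `1/(1-q)` applied to `(b^(1-1/q) p)^q · b^(1-q) = p^q`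
(for `q < 1`), compares `V_g(b)` with `‖p(·,g)‖_q`, with equality at the escort bet
`b(x|g) ∝ p(x,g)^q`. Since `t ↦ t^(q/(q-1))` is increasing for `q > 1` and decreasing for
`q < 1`, both cases give the same upper bound on the certainty equivalent, and the constant
odds `C` factor out.
-/

open Finset Real

section Holder

variable {ι : Type*} [Fintype ι] {q : ℝ} {b p : ι → ℝ}

theorem sum_rpow_one_sub_inv_mul_le (hq : 1 < q) (hb : ∀ i, 0 ≤ b i) (hb1 : ∑ i, b i = 1)
    (hp : ∀ i, 0 ≤ p i) :
    ∑ i, b i ^ (1 - 1 / q) * p i ≤ (∑ i, p i ^ q) ^ (1 / q) := by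
  have hconj : HolderConjugate (q / (q - 1)) q := by
    rw [holderConjugate_iff]
    constructor
    · rw [lt_div_iff₀ (by linarith)]; linarith
    · field_simp [(sub_pos.mpr hq).ne']; ring
  have hb_pow : ∀ i, (b i ^ (1 - 1 / q)) ^ (q / (q - 1)) = b i := fun i => by
    rw [← rpow_mul (hb i), show (1 - 1 / q) * (q / (q - 1)) = 1 by
      field_simp [(sub_pos.mpr hq).ne'], rpow_one]
  have h := inner_le_Lp_mul_Lq_of_nonneg (s := univ) hconj
    (fun i _ => rpow_nonneg (hb i) (1 - 1 / q)) (fun i _ => hp i)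
  simp only [hb_pow] at h
  rwa [hb1, one_rpow, one_mul] at h

theorem sum_rpow_le_sum_rpow_one_sub_inv_mul (hq0 : 0 < q) (hq1 : q < 1) (hb : ∀ i, 0 < b i)
    (hb1 : ∑ i, b i = 1) (hp : ∀ i, 0 ≤ p i) :
    (∑ i, p i ^ q) ^ (1 / q) ≤ ∑ i, b i ^ (1 - 1 / q) * p i := by
  set V := ∑ i, b i ^ (1 - 1 / q) * p i
  have hterm : ∀ i, 0 ≤ b i ^ (1 - 1 / q) * p i := fun i =>
    mul_nonneg (rpow_nonneg (hb i).le _) (hp i)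
  have hconj : HolderConjugate (1 / q) (1 / (1 - q)) := by
    rw [holderConjugate_iff]
    exact ⟨one_lt_one_div hq0 hq1, by rw [one_div, one_div, inv_inv, inv_inv]; ring⟩
  have hsplit : ∀ i, (b i ^ (1 - 1 / q) * p i) ^ q * b i ^ (1 - q) = p i ^ q := fun i => by
    rw [mul_rpow (rpow_nonneg (hb i).le _) (hp i), ← rpow_mul (hb i).le, mul_right_comm,
      ← rpow_add (hb i), show (1 - 1 / q) * q + (1 - q) = 0 by field_simp; ring, rpow_zero,
      one_mul]
  have hV_pow : ∀ i, ((b i ^ (1 - 1 / q) * p i) ^ q) ^ (1 / q) = b i ^ (1 - 1 / q) * p i :=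
    fun i => by rw [← rpow_mul (hterm i), mul_one_div_cancel hq0.ne', rpow_one]
  have hb_pow : ∀ i, (b i ^ (1 - q)) ^ (1 / (1 - q)) = b i := fun i => by
    rw [← rpow_mul (hb i).le, mul_one_div_cancel (sub_pos.mpr hq1).ne', rpow_one]
  have h : ∑ i, p i ^ q ≤ V ^ q := by
    have := inner_le_Lp_mul_Lq_of_nonneg (s := univ) hconj
      (fun i _ => rpow_nonneg (hterm i) q) (fun i _ => rpow_nonneg (hb i).le (1 - q))
    simpa only [hsplit, hV_pow, hb_pow, one_div_one_div, hb1, one_rpow, mul_one] using this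
  calc (∑ i, p i ^ q) ^ (1 / q)
      ≤ (V ^ q) ^ (1 / q) :=
        rpow_le_rpow (sum_nonneg fun i _ => rpow_nonneg (hp i) q) h (by positivity)
    _ = V := by
        rw [← rpow_mul (sum_nonneg fun i _ => hterm i), mul_one_div_cancel hq0.ne', rpow_one]

end Holder

section Escort

variable {ι : Type*} [Fintype ι]

noncomputable def escort (q : ℝ) (p : ι → ℝ) (i : ι) : ℝ :=
  p i ^ q / ∑ j, p j ^ q

variable [Nonempty ι] {q : ℝ} {p : ι → ℝ}

theorem sum_rpow_pos (hp : ∀ i, 0 < p i) : 0 < ∑ i, p i ^ q :=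
  sum_pos (fun i _ => rpow_pos_of_pos (hp i) q) univ_nonempty

theorem escort_pos (hp : ∀ i, 0 < p i) (i : ι) : 0 < escort q p i :=
  div_pos (rpow_pos_of_pos (hp i) q) (sum_rpow_pos hp)

theorem sum_escort (hp : ∀ i, 0 < p i) : ∑ i, escort q p i = 1 := by
  unfold escort
  rw [← sum_div, div_self (sum_rpow_pos hp).ne']

theorem sum_escort_rpow_one_sub_inv_mul (hq : q ≠ 0) (hp : ∀ i, 0 < p i) :
    ∑ i, escort q p i ^ (1 - 1 / q) * p i = (∑ i, p i ^ q) ^ (1 / q) := by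
  set T := ∑ j, p j ^ q
  have hT : 0 < T := sum_rpow_pos hp
  have hterm : ∀ i, escort q p i ^ (1 - 1 / q) * p i = p i ^ q / T ^ (1 - 1 / q) := fun i => by
    rw [escort, div_rpow (rpow_nonneg (hp i).le q) hT.le, ← rpow_mul (hp i).le,
      show q * (1 - 1 / q) = q - 1 by field_simp, div_mul_eq_mul_div,
      ← rpow_add_one (hp i).ne', sub_add_cancel]
  rw [sum_congr rfl fun i _ => hterm i, ← sum_div, div_eq_iff (rpow_pos_of_pos hT _).ne',
    ← rpow_add hT, show 1 / q + (1 - 1 / q) = 1 by ring, rpow_one]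

end Escort

section Conditional

variable {X G : Type*} [Fintype X] [Fintype G] {q : ℝ} {b p : X → G → ℝ}

theorem rpow_sum_sum_mul_const_rpow_mul {r C : ℝ} (hr : r ≠ 0) (hC : 0 ≤ C)
    (hb : ∀ x g, 0 ≤ b x g) (hp : ∀ x g, 0 ≤ p x g) :
    (∑ x, ∑ g, (b x g * C) ^ r * p x g) ^ (1 / r)
      = C * (∑ g, ∑ x, b x g ^ r * p x g) ^ (1 / r) := by
  have hfactor : ∑ x, ∑ g, (b x g * C) ^ r * p x g = C ^ r * ∑ g, ∑ x, b x g ^ r * p x g := by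
    simp only [sum_comm (γ := X), mul_sum, mul_rpow (hb _ _) hC]
    exact sum_congr rfl fun _ _ => sum_congr rfl fun _ _ => by ring
  have hsum : 0 ≤ ∑ g, ∑ x, b x g ^ r * p x g :=
    sum_nonneg fun g _ => sum_nonneg fun x _ => mul_nonneg (rpow_nonneg (hb x g) r) (hp x g)
  rw [hfactor, mul_rpow (rpow_nonneg hC r) hsum, ← rpow_mul hC, mul_one_div_cancel hr, rpow_one]

theorem rpow_sum_sum_rpow_mul_le [Nonempty X] [Nonempty G] (hq0 : 0 < q) (hq1 : q ≠ 1)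
    (hb : ∀ x g, 0 < b x g) (hb1 : ∀ g, ∑ x, b x g = 1) (hp : ∀ x g, 0 < p x g) :
    (∑ g, ∑ x, b x g ^ (1 - 1 / q) * p x g) ^ (q / (q - 1))
      ≤ (∑ g, (∑ x, p x g ^ q) ^ (1 / q)) ^ (q / (q - 1)) := by
  rcases hq1.lt_or_gt with hlt | hgt
  · have hS : 0 < ∑ g, (∑ x, p x g ^ q) ^ (1 / q) :=
      sum_pos (fun g _ => rpow_pos_of_pos (sum_rpow_pos (hp · g)) _) univ_nonempty
    refine rpow_le_rpow_of_nonpos hS (sum_le_sum fun g _ => ?_)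
      (div_nonpos_of_nonneg_of_nonpos hq0.le (by linarith))
    exact sum_rpow_le_sum_rpow_one_sub_inv_mul hq0 hlt (hb · g) (hb1 g) (fun x => (hp x g).le)
  · refine rpow_le_rpow (sum_nonneg fun g _ => sum_nonneg fun x _ =>
      mul_nonneg (rpow_nonneg (hb x g).le _) (hp x g).le) (sum_le_sum fun g _ => ?_)
      (div_nonneg hq0.le (by linarith))
    exact sum_rpow_one_sub_inv_mul_le hgt (fun x => (hb x g).le) (hb1 g) (fun x => (hp x g).le)

end Conditional

theorem arimoto_renyi_operational_general
    {X G : Type} [Fintype X] [Fintype G] [Nonempty X] [Nonempty G]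
    (q : ℝ) (hq0 : 0 < q) (hq1 : q ≠ 1) (C : ℝ) (hC : 0 < C)
    (p : X → G → ℝ) (hp_pos : ∀ x g, 0 < p x g) :
    IsGreatest
      {w : ℝ | ∃ b : X → G → ℝ, (∀ x g, 0 < b x g) ∧ (∀ g, ∑ x, b x g = 1) ∧
        w = (∑ x, ∑ g, (b x g * C) ^ (1 - 1 / q) * p x g) ^ (1 / (1 - 1 / q))}
      (C * (∑ g, (∑ x, (p x g) ^ q) ^ (1 / q)) ^ (q / (q - 1))) := by
  have hr : 1 - 1 / q ≠ 0 := by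
    rw [sub_ne_zero, ne_comm, one_div, inv_ne_one]; exact hq1
  have hexp : 1 / (1 - 1 / q) = q / (q - 1) := by field_simp
  let escortBet : X → G → ℝ := fun x g => escort q (p · g) x
  have hescort_pos : ∀ x g, 0 < escortBet x g := fun x g => escort_pos (hp_pos · g) x
  refine ⟨⟨escortBet, hescort_pos, fun g => sum_escort (hp_pos · g), ?_⟩, ?_⟩
  · rw [rpow_sum_sum_mul_const_rpow_mul hr hC.le (fun x g => (hescort_pos x g).le)
      (fun x g => (hp_pos x g).le), hexp]
    simp only [escortBet, sum_escort_rpow_one_sub_inv_mul hq0.ne' (hp_pos · _)]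
  · rintro _ ⟨b, hb, hb1, rfl⟩
    rw [rpow_sum_sum_mul_const_rpow_mul hr hC.le (fun x g => (hb x g).le)
      (fun x g => (hp_pos x g).le), hexp]
    exact mul_le_mul_of_nonneg_left (rpow_sum_sum_rpow_mul_le hq0 hq1 hb hb1 hp_pos) hC.le

/-- Operational formula for the Arimoto–Rényi conditional quantity:
for any strictly positive joint PMF `p_{XG}`, order `q ∈ (0,1) ∪ (1,∞)` and
constant `C > 0`, the maximum over conditional betting PMFs `b_{X|G}` of
`(Σ_{x,g} (b(x|g)·C)^{1−1/q} p(x,g))^{1/(1−1/q)}` equals `C · p_q(X|G)`, where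
`p_q(X|G) = (Σ_g (Σ_x p(x,g)^q)^{1/q})^{q/(q−1)}`. -/
theorem arimoto_renyi_operational
    {X G : Type} [Fintype X] [Fintype G] [Nonempty X] [Nonempty G]
    (q : ℝ) (hq0 : 0 < q) (hq1 : q ≠ 1) (C : ℝ) (hC : 0 < C)
    (p : X → G → ℝ) (hp_pos : ∀ x g, 0 < p x g) (hp_sum : ∑ x, ∑ g, p x g = 1) :
    IsGreatest
      {w : ℝ | ∃ b : X → G → ℝ, (∀ x g, 0 < b x g) ∧ (∀ g, ∑ x, b x g = 1) ∧
        w = (∑ x, ∑ g, (b x g * C) ^ (1 - 1 / q) * p x g) ^ (1 / (1 - 1 / q))}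
      (C * (∑ g, (∑ x, (p x g) ^ q) ^ (1 / q)) ^ (q / (q - 1))) :=
  arimoto_renyi_operational_general q hq0 hq1 C hC p hp_pos
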